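/- arXiv:1204.0636 — 2 statements merged into one kernel-verified Lean document; each statement's English description precedes it below -/
import Mathlib

section
/- Let G = (V, E) be a directed graph on n vertices with latin matrix L and latin powers L^[k]. The matrix L^[n] is diagonal in the semiring of distinguished languages: for all i ≠ j, L^[n]_{ij} = {λ} (the zero of the semiring). -/
attribute [local instance] Classical.propDecidable

/-- A simple word over an alphabet: a nonempty word with pairwise distinct letters. -/
def IsSimpleWord {α : Type*} (w : List α) : Prop := w ≠ [] ∧ w.Nodup

/-- A simple cyclic word: a word of the form `a₁…a_k a₁` with `a₁…a_k` a simple word. -/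
def IsCyclicWord {α : Type*} (w : List α) : Prop :=
  ∃ (a : α) (l : List α), (a :: l).Nodup ∧ w = (a :: l) ++ [a]

/-- `Σ_dw*`: the set of distinguished words over `α`, together with the empty word `λ = []`. -/
def DW (α : Type*) : Set (List α) :=
  {w | w = [] ∨ IsSimpleWord w ∨ IsCyclicWord w}

/-- The latin composition of (distinguished) words.  If either word is `λ` or a simple
cyclic word the result is `λ`; for simple words `x = a₁…a_k`, `y = b₁…b_r`:
`x ∘ℓ y = a₁…a_k b₂…b_r` if `a_k = b₁` and `{a₁,…,a_k} ∩ {b₂,…,b_r} = ∅`;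
`x ∘ℓ y = a₁…a_k b₂…b_{r-1} a₁` if `a_k = b₁`, `b_r = a₁` and
`{a₁,…,a_k} ∩ {b₂,…,b_{r-1}} = ∅`; and `x ∘ℓ y = λ` otherwise. -/
noncomputable def latin {α : Type*} (x y : List α) : List α :=
  if IsSimpleWord x ∧ IsSimpleWord y then
    if x.getLast? = y.head? ∧ ∀ a ∈ x, a ∉ y.tail then
      x ++ y.tail
    else if x.getLast? = y.head? ∧ y.getLast? = x.head? ∧ ∀ a ∈ x, a ∉ y.tail.dropLast then
      x ++ y.tail.dropLast ++ x.head?.toList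
    else []
  else []

/-- A distinguished language over `α`: a set of distinguished words containing `λ`. -/
def IsDLang {α : Type*} (L : Set (List α)) : Prop := L ⊆ DW α ∧ [] ∈ L

/-- The latin composition of languages: `L₁ ∘ℓ L₂ = {x ∘ℓ y : x ∈ L₁, y ∈ L₂}`. -/
def latinLang {α : Type*} (L₁ L₂ : Set (List α)) : Set (List α) :=
  {w | ∃ x ∈ L₁, ∃ y ∈ L₂, w = latin x y}

/-- The latin matrix of the directed graph `G = (Fin n, E)`: entry `(i,j)` is the
distinguished language `{λ, v_i v_j}` if `(v_i, v_j) ∈ E`, and `{λ}` otherwise. -/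
noncomputable def latinMat {n : ℕ} (E : Set (Fin n × Fin n)) :
    Fin n → Fin n → Set (List (Fin n)) :=
  fun i j => if (i, j) ∈ E then {[], [i, j]} else {[]}

/-- Matrix product over the semiring of distinguished languages:
`(M ∘ℓ N)_{ij} = ⋃_m M_{im} ∘ℓ N_{mj}`. -/
def latinMatMul {n : ℕ} (M N : Fin n → Fin n → Set (List (Fin n))) :
    Fin n → Fin n → Set (List (Fin n)) :=
  fun i j => ⋃ m : Fin n, latinLang (M i m) (N m j)

/-- Latin powers of a matrix: `L^[1] = L` and `L^[k] = L ∘ℓ L^[k-1]` for `k ≥ 2`. -/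
noncomputable def latinPow {n : ℕ} (M : Fin n → Fin n → Set (List (Fin n))) :
    ℕ → Fin n → Fin n → Set (List (Fin n))
  | 0 => fun _ _ => {[]}
  | 1 => M
  | k + 2 => latinMatMul M (latinPow M (k + 1))

/-!
A nonempty word of `L^[k]_{ij}` is built by prepending letters along edges, and latin
composition only keeps a word when no letter repeats, except for closing a cycle, which
forces `i = j`. So for `i ≠ j` every nonempty word of `L^[k]_{ij}` is a simple path with
`k + 1` letters; over `n` vertices there is no such word once `k = n`.
-/

section LatinWord

variable {α : Type*}

lemma latin_eq_nil_of_not_isSimpleWord_left {x : List α} (hx : ¬ IsSimpleWord x) (y : List α) :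
    latin x y = [] := by
  simp [latin, hx]

lemma latin_eq_nil_of_not_isSimpleWord_right (x : List α) {y : List α} (hy : ¬ IsSimpleWord y) :
    latin x y = [] := by
  simp [latin, hy]

lemma not_isSimpleWord_nil : ¬ IsSimpleWord ([] : List α) := fun h => h.1 rfl

lemma latin_pair_cons (i : α) {m : α} {t : List α} (ht : (m :: t).Nodup) :
    latin [i, m] (m :: t) = [] ∨
      (latin [i, m] (m :: t) = i :: m :: t ∧ (i :: m :: t).Nodup) ∨
      ((m :: t).getLast? = some i ∧ ¬ (latin [i, m] (m :: t)).Nodup) := by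
  unfold latin
  split_ifs with hsimple hpath hcycle
  · have him : i ≠ m := by simpa using hsimple.1.2
    have hit : i ∉ t := hpath.2 i (by simp)
    exact Or.inr (Or.inl ⟨rfl, List.nodup_cons.2 ⟨by simp [him, hit], ht⟩⟩)
  · refine Or.inr (Or.inr ⟨by simpa using hcycle.2.1, ?_⟩)
    simp [List.nodup_append]
  · exact Or.inl rfl
  · exact Or.inl rfl

end LatinWord

lemma mem_latinMat {n : ℕ} {E : Set (Fin n × Fin n)} {i j : Fin n} {x : List (Fin n)}
    (hx : x ∈ latinMat E i j) : x = [] ∨ x = [i, j] := by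
  unfold latinMat at hx
  split at hx
  · exact hx
  · exact Or.inl hx

lemma nil_mem_latinMat {n : ℕ} (E : Set (Fin n × Fin n)) (i j : Fin n) :
    [] ∈ latinMat E i j := by
  unfold latinMat
  split_ifs <;> simp

lemma nil_mem_latinPow {n : ℕ} {M : Fin n → Fin n → Set (List (Fin n))}
    (hM : ∀ i j, [] ∈ M i j) (k : ℕ) (i j : Fin n) : [] ∈ latinPow M (k + 1) i j := by
  induction k generalizing i j with
  | zero => exact hM i j
  | succ k ih =>
    have hnil : latin [] [] = ([] : List (Fin n)) :=
      latin_eq_nil_of_not_isSimpleWord_left not_isSimpleWord_nil []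
    exact Set.mem_iUnion.2 ⟨i, [], hM i i, [], ih i j, hnil.symm⟩

lemma mem_latinPow_latinMat {n : ℕ} {E : Set (Fin n × Fin n)} {k : ℕ} {i j : Fin n}
    {w : List (Fin n)} (hw : w ∈ latinPow (latinMat E) (k + 1) i j) :
    w = [] ∨ (w.Nodup ∧ w.length = k + 2 ∧ w.head? = some i ∧ w.getLast? = some j) ∨
      (i = j ∧ ¬ w.Nodup) := by
  induction k generalizing i j w with
  | zero =>
    rcases mem_latinMat hw with rfl | rfl
    · exact Or.inl rfl
    · by_cases hij : i = j
      · exact Or.inr (Or.inr ⟨hij, by simp [hij]⟩)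
      · exact Or.inr (Or.inl ⟨by simp [hij], rfl, rfl, rfl⟩)
  | succ k ih =>
    obtain ⟨m, x, hx, y, hy, rfl⟩ := Set.mem_iUnion.1 hw
    rcases mem_latinMat hx with rfl | rfl
    · exact Or.inl (latin_eq_nil_of_not_isSimpleWord_left not_isSimpleWord_nil y)
    rcases ih hy with rfl | ⟨hnd, hlen, hhead, hlast⟩ | ⟨-, hnd⟩
    · exact Or.inl (latin_eq_nil_of_not_isSimpleWord_right _ not_isSimpleWord_nil)
    · obtain ⟨t, rfl⟩ : ∃ t, y = m :: t := by
        cases y with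
        | nil => simp at hhead
        | cons b t => exact ⟨t, by simpa using hhead⟩
      rcases latin_pair_cons i hnd with h | ⟨h, hnd'⟩ | ⟨hcyc, h⟩
      · exact Or.inl h
      · rw [h]
        refine Or.inr (Or.inl ⟨hnd', by simpa using hlen, rfl, ?_⟩)
        rwa [List.getLast?_cons_cons]
      · exact Or.inr (Or.inr ⟨by simpa [hlast] using hcyc.symm, h⟩)
    · exact Or.inl (latin_eq_nil_of_not_isSimpleWord_right _ fun h => hnd h.2)

theorem latinPow_n_diagonal_general (n : ℕ) (E : Set (Fin n × Fin n))
    (i j : Fin n) (hij : i ≠ j) :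
    latinPow (latinMat E) n i j = {([] : List (Fin n))} := by
  cases n with
  | zero => exact i.elim0
  | succ k =>
    refine Set.eq_singleton_iff_unique_mem.2
      ⟨nil_mem_latinPow (nil_mem_latinMat E) k i j, fun w hw => ?_⟩
    rcases mem_latinPow_latinMat hw with rfl | ⟨hnd, hlen, -⟩ | ⟨hji, -⟩
    · rfl
    · have hcard := hnd.length_le_card
      simp only [Fintype.card_fin] at hcard
      omega
    · exact absurd hji hij

/-- the matrix `L^[n]` is diagonal in the semiring of distinguished
languages: for all `i ≠ j`, `L^[n]_{ij} = {λ}` (the zero of the semiring). -/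
theorem latinPow_n_diagonal (n : ℕ) (hn : 1 ≤ n) (E : Set (Fin n × Fin n))
    (i j : Fin n) (hij : i ≠ j) :
    latinPow (latinMat E) n i j = {([] : List (Fin n))} :=
  latinPow_n_diagonal_general n E i j hij
end

section
/- Let G = (V, E) be a directed graph on n vertices with latin matrix L and latin powers L^[k]. For every q ≥ 1, L^[n+q] is the zero matrix of the semiring of distinguished languages, i.e. L^[n+q]_{ij} = {λ} for all i, j. -/
attribute [local instance] Classical.propDecidable

/-! A nonempty word of `L^[k]` is a latin composition of `k` edge words `v_i v_j`, each
composition adding one letter, so it has `k + 1` letters. Being distinguished, it has at most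
`n + 1` letters. Hence `L^[k]` has no nonempty word once `k ≥ n + 1`. -/

section Words

variable {α : Type*}

@[simp]
theorem latin_nil_left (y : List α) : latin [] y = [] := by
  simp [latin, IsSimpleWord]

@[simp]
theorem latin_nil_right (x : List α) : latin x [] = [] := by
  simp [latin, IsSimpleWord]

theorem length_le_of_mem_DW [Fintype α] {w : List α} (hw : w ∈ DW α) :
    w.length ≤ Fintype.card α + 1 := by
  rcases hw with rfl | ⟨-, hnd⟩ | ⟨a, l, hnd, rfl⟩
  · simp
  · exact hnd.length_le_card.trans (Nat.le_succ _)
  · simpa using hnd.length_le_card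

theorem latin_mem_DW (x y : List α) : latin x y ∈ DW α := by
  unfold latin
  split_ifs with hs hglue hcycle
  · refine Or.inr (Or.inl ⟨by simp [hs.1.1], List.nodup_append.2 ⟨hs.1.2, hs.2.2.tail, ?_⟩⟩)
    rintro a ha _ hb rfl
    exact hglue.2 a ha hb
  · obtain ⟨⟨hxne, hxnd⟩, -, hynd⟩ := hs
    obtain ⟨a, l, rfl⟩ := List.exists_cons_of_ne_nil hxne
    refine Or.inr (Or.inr ⟨a, l ++ y.tail.dropLast, ?_, by simp⟩)
    rw [← List.cons_append, List.nodup_append]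
    refine ⟨hxnd, (List.dropLast_sublist _).nodup hynd.tail, ?_⟩
    rintro b hb _ hc rfl
    exact hcycle.2.2 b hb hc
  all_goals exact Or.inl rfl

theorem latin_eq_nil_or_length (x y : List α) :
    latin x y = [] ∨ (latin x y).length + 1 = x.length + y.length := by
  unfold latin
  split_ifs with hs hglue hcycle
  · have := List.length_pos_iff.2 hs.2.1
    simp only [List.length_append, List.length_tail]
    omega
  · -- if `y.tail` were empty, the first branch would have applied
    have htail : y.tail ≠ [] := fun h => hglue ⟨hcycle.1, by simp [h]⟩
    obtain ⟨a, l, rfl⟩ := List.exists_cons_of_ne_nil hs.1.1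
    have := List.length_pos_iff.2 htail
    simp only [List.length_tail] at this
    simp only [List.head?_cons, Option.toList_some, List.length_append, List.length_dropLast,
      List.length_tail, List.length_cons, List.length_nil]
    omega
  all_goals exact Or.inl rfl

theorem IsDLang.latinLang {L₁ L₂ : Set (List α)} (h₁ : IsDLang L₁) (h₂ : IsDLang L₂) :
    IsDLang (latinLang L₁ L₂) := by
  refine ⟨?_, [], h₁.2, [], h₂.2, (latin_nil_left []).symm⟩
  rintro _ ⟨x, -, y, -, rfl⟩
  exact latin_mem_DW x y

end Words

section Matrices

variable {n : ℕ} (E : Set (Fin n × Fin n))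

theorem isDLang_latinMat (i j : Fin n) : IsDLang (latinMat E i j) := by
  unfold latinMat
  split_ifs
  · refine ⟨?_, by simp⟩
    rintro w (rfl | rfl)
    · exact Or.inl rfl
    by_cases hij : i = j
    · exact Or.inr (Or.inr ⟨i, [], by simp, by simp [hij]⟩)
    · exact Or.inr (Or.inl ⟨by simp, by simp [hij]⟩)
  · exact ⟨by rintro w rfl; exact Or.inl rfl, rfl⟩

theorem isDLang_latinMatMul {M N : Fin n → Fin n → Set (List (Fin n))}
    (hM : ∀ i j, IsDLang (M i j)) (hN : ∀ i j, IsDLang (N i j)) (i j : Fin n) :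
    IsDLang (latinMatMul M N i j) := by
  refine ⟨?_, Set.mem_iUnion.2 ⟨i, ((hM i i).latinLang (hN i j)).2⟩⟩
  intro w hw
  obtain ⟨m, hm⟩ := Set.mem_iUnion.1 hw
  exact ((hM i m).latinLang (hN m j)).1 hm

theorem isDLang_latinPow (k : ℕ) (i j : Fin n) : IsDLang (latinPow (latinMat E) k i j) := by
  induction k using Nat.twoStepInduction generalizing i j with
  | zero => exact ⟨by rintro w rfl; exact Or.inl rfl, rfl⟩
  | one => exact isDLang_latinMat E i j
  | more k _ ih => exact isDLang_latinMatMul (isDLang_latinMat E) ih i j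

theorem eq_nil_or_length_of_mem_latinMat {i j : Fin n} {w : List (Fin n)}
    (hw : w ∈ latinMat E i j) : w = [] ∨ w.length = 2 := by
  unfold latinMat at hw
  split_ifs at hw
  · rcases hw with rfl | rfl <;> simp
  · exact Or.inl hw

theorem eq_nil_or_length_of_mem_latinPow {k : ℕ} {i j : Fin n} {w : List (Fin n)}
    (hw : w ∈ latinPow (latinMat E) (k + 1) i j) : w = [] ∨ w.length = k + 2 := by
  induction k generalizing i j w with
  | zero => exact eq_nil_or_length_of_mem_latinMat E hw
  | succ k ih =>
    obtain ⟨m, x, hx, y, hy, rfl⟩ := Set.mem_iUnion.1 hw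
    rcases latin_eq_nil_or_length x y with h | h
    · exact Or.inl h
    rcases eq_nil_or_length_of_mem_latinMat E hx with rfl | hx
    · exact Or.inl (latin_nil_left _)
    rcases ih hy with rfl | hy
    · exact Or.inl (latin_nil_right _)
    exact Or.inr (by omega)

end Matrices

theorem latinPow_eventually_zero_general (n : ℕ) (E : Set (Fin n × Fin n))
    (q : ℕ) (hq : 1 ≤ q) (i j : Fin n) :
    latinPow (latinMat E) (n + q) i j = {([] : List (Fin n))} := by
  obtain ⟨p, rfl⟩ := Nat.exists_eq_add_of_le' hq
  have hL := isDLang_latinPow E (n + (p + 1)) i j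
  refine Set.eq_singleton_iff_unique_mem.2 ⟨hL.2, fun w hw => ?_⟩
  have hshort : w.length ≤ n + 1 := by simpa using length_le_of_mem_DW (hL.1 hw)
  rcases eq_nil_or_length_of_mem_latinPow (k := n + p) E hw with h | h
  · exact h
  · omega

/-- for every `q ≥ 1`, `L^[n+q]` is the zero matrix of the semiring of
distinguished languages: `L^[n+q]_{ij} = {λ}` for all `i, j`. -/
theorem latinPow_eventually_zero (n : ℕ) (hn : 1 ≤ n) (E : Set (Fin n × Fin n))
    (q : ℕ) (hq : 1 ≤ q) (i j : Fin n) :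
    latinPow (latinMat E) (n + q) i j = {([] : List (Fin n))} :=
  latinPow_eventually_zero_general n E q hq i j
end
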